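/- In a separated weak Büchi game, the system's winning region is a union of strongly connected components of the product game graph: if (i,o) is in the winning region and (î,ô) lies in the same SCC of the product graph, then (î,ô) is in the winning region. -/

import Mathlib

open scoped Classical

/-- Reachability: reflexive-transitive closure of the edge relation. -/
def Reach {V : Type*} (E : V → V → Prop) : V → V → Prop := Relation.ReflTransGen E

/-- Two vertices lie in the same strongly connected component: mutual reachability. -/
def SameSCC {V : Type*} (E : V → V → Prop) (s t : V) : Prop := Reach E s t ∧ Reach E t s

/-- Edge relation of the product of two directed graphs (componentwise). -/
def prodEdge {I O : Type*} (EI : I → I → Prop) (EO : O → O → Prop) :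
    I × O → I × O → Prop := fun p q => EI p.1 q.1 ∧ EO p.2 q.2

/-- A system strategy: given the history of states so far and the new environment
input, choose the new output. -/
abbrev Strat (I O : Type*) := List (I × O) → I → O

/-- The history (prefix) of a play up to and including position `n`. -/
def hist {I O : Type*} (π : ℕ → I × O) (n : ℕ) : List (I × O) := (List.range (n + 1)).map π

/-- A play is consistent with system strategy `f` from state `s`. -/
def Consistent {I O : Type*} (f : Strat I O) (s : I × O) (π : ℕ → I × O) : Prop :=
  π 0 = s ∧ ∀ n, (π (n + 1)).2 = f (hist π n) (π (n + 1)).1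

/-- All environment moves along the play are edges of the input graph. -/
def EnvLegal {I O : Type*} (EI : I → I → Prop) (π : ℕ → I × O) : Prop :=
  ∀ n, EI (π n).1 (π (n + 1)).1

/-- All system moves along the play are edges of the output graph. -/
def SysLegal {I O : Type*} (EO : O → O → Prop) (π : ℕ → I × O) : Prop :=
  ∀ n, EO (π n).2 (π (n + 1)).2

/-- The play satisfies `P` infinitely often. -/
def InfOften {V : Type*} (P : V → Prop) (π : ℕ → V) : Prop := ∀ N, ∃ n, N ≤ n ∧ P (π n)

/-- `f` is a winning system strategy for the Büchi condition `GF acc` from `s`: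
every play from `s` consistent with `f` in which the environment moves legally has
legal system moves and visits `acc` infinitely often. -/
def WinningFrom {I O : Type*} (EI : I → I → Prop) (EO : O → O → Prop)
    (acc : I × O → Prop) (f : Strat I O) (s : I × O) : Prop :=
  ∀ π : ℕ → I × O, Consistent f s π → EnvLegal EI π →
    SysLegal EO π ∧ InfOften acc π

/-- The system can win the weak Büchi game `GF acc` from `s`. -/
def SysWins {I O : Type*} (EI : I → I → Prop) (EO : O → O → Prop)
    (acc : I × O → Prop) (s : I × O) : Prop := ∃ f, WinningFrom EI EO acc f s

/-- Projection onto the inputs of the SCC (of the product graph) containing `s`. -/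
def sccProjI {I O : Type*} (EI : I → I → Prop) (EO : O → O → Prop) (s : I × O) : Set I :=
  {i' | ∃ o', SameSCC (prodEdge EI EO) s (i', o')}

/-- Projection onto the outputs of the SCC (of the product graph) containing `s`. -/
def sccProjO {I O : Type*} (EI : I → I → Prop) (EO : O → O → Prop) (s : I × O) : Set O :=
  {o' | ∃ i', SameSCC (prodEdge EI EO) s (i', o')}

/-!
From `(ih, oh)` the system first walks its output back to `o`; from then on it answers, `m'`
steps late, what the winning strategy `f` answers from `(i, o)` against the inputs of a path
from `i` to `ih` followed by the actual inputs. That simulated play is won by `f`, and it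
shadows the real play: real outputs are simulated outputs shifted by `m'`, simulated inputs are
real inputs shifted by `m`. By finiteness, some pair (accepting simulated state `v`, real state
`u`) recurs infinitely often. Then `v` and `u` lie on cycles of the product graph, share their
output and have mutually reachable inputs. For a state on a product cycle, the projections of
its SCC are the SCCs of its components, so `v` and `u` have the same projections and `u` is
accepting as well.
-/

open Filter Set

inductive ReachIn {V : Type*} (E : V → V → Prop) : ℕ → V → V → Prop
  | refl (a : V) : ReachIn E 0 a a
  | head {n : ℕ} {a b c : V} : E a b → ReachIn E n b c → ReachIn E (n + 1) a c

namespace ReachIn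

variable {V W : Type*} {E : V → V → Prop} {n k : ℕ} {a b c : V}

theorem trans (h₁ : ReachIn E n a b) (h₂ : ReachIn E k b c) : ReachIn E (n + k) a c := by
  induction h₁ with
  | refl => simpa using h₂
  | head e _ ih => rw [Nat.add_right_comm]; exact .head e (ih h₂)

theorem iterate (h : ReachIn E n a a) : ∀ k, ReachIn E (k * n) a a
  | 0 => by simpa using refl a
  | k + 1 => by rw [Nat.succ_mul]; exact (h.iterate k).trans h

theorem exists_split (h : ReachIn E (n + k) a c) : ∃ b, ReachIn E n a b ∧ ReachIn E k b c := by
  induction n generalizing a with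
  | zero => exact ⟨a, refl a, by simpa using h⟩
  | succ n ih =>
    rw [Nat.add_right_comm] at h
    obtain _ | ⟨e, h'⟩ := h
    obtain ⟨b, h₁, h₂⟩ := ih h'
    exact ⟨b, .head e h₁, h₂⟩

theorem map {F : W → W → Prop} {g : V → W} (hg : ∀ a b, E a b → F (g a) (g b))
    (h : ReachIn E n a b) : ReachIn F n (g a) (g b) := by
  induction h with
  | refl => exact refl _
  | head e _ ih => exact .head (hg _ _ e) ih

theorem reach (h : ReachIn E n a b) : Reach E a b := by
  induction h with
  | refl => exact .refl
  | head e _ ih => exact .head e ih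

theorem exists_seq (h : ReachIn E n a b) :
    ∃ p : ℕ → V, p 0 = a ∧ p n = b ∧ ∀ j < n, E (p j) (p (j + 1)) := by
  induction h with
  | refl a => exact ⟨fun _ => a, rfl, rfl, fun _ h => absurd h (Nat.not_lt_zero _)⟩
  | @head n a b c e _ ih =>
    obtain ⟨p, hp0, hpn, hp⟩ := ih
    refine ⟨fun | 0 => a | j + 1 => p j, rfl, hpn, ?_⟩
    rintro (_ | j) hj
    · simpa [hp0] using e
    · exact hp j (by omega)

theorem of_chain {g : ℕ → V} (hg : ∀ n, E (g n) (g (n + 1))) (k n : ℕ) :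
    ReachIn E n (g k) (g (k + n)) := by
  induction n generalizing k with
  | zero => exact refl _
  | succ n ih => rw [show k + (n + 1) = k + 1 + n by omega]; exact .head (hg k) (ih (k + 1))

theorem prod {I O : Type*} {EI : I → I → Prop} {EO : O → O → Prop} {a a' : I} {b b' : O}
    (hI : ReachIn EI n a a') (hO : ReachIn EO n b b') :
    ReachIn (prodEdge EI EO) n (a, b) (a', b') := by
  induction hI generalizing b with
  | refl => cases hO; exact refl _
  | head e _ ih =>
    obtain _ | ⟨e', hO'⟩ := hO
    exact .head ⟨e, e'⟩ (ih hO')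

end ReachIn

section Reach

variable {V W : Type*} {E : V → V → Prop} {a b : V}

theorem reach_iff_exists_reachIn : Reach E a b ↔ ∃ n, ReachIn E n a b := by
  refine ⟨fun h => ?_, fun ⟨_, h⟩ => h.reach⟩
  induction h using Relation.ReflTransGen.head_induction_on with
  | refl => exact ⟨0, .refl _⟩
  | head e _ ih =>
    obtain ⟨n, h⟩ := ih
    exact ⟨n + 1, .head e h⟩

theorem reach_of_chain {g : ℕ → V} (hg : ∀ n, E (g n) (g (n + 1))) {j k : ℕ} (h : j ≤ k) :
    Reach E (g j) (g k) := by
  obtain ⟨n, rfl⟩ := Nat.exists_eq_add_of_le h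
  exact (ReachIn.of_chain hg j n).reach

theorem exists_cycle_of_chain {g : ℕ → V} (hg : ∀ n, E (g n) (g (n + 1))) {j k : ℕ}
    (h : j < k) (heq : g j = g k) : ∃ c, ReachIn E (c + 1) (g j) (g j) := by
  obtain ⟨c, rfl⟩ := Nat.exists_eq_add_of_lt h
  refine ⟨c, ?_⟩
  have := ReachIn.of_chain hg j (c + 1)
  rwa [← Nat.add_assoc, ← heq] at this

theorem SameSCC.symm {s t : V} (h : SameSCC E s t) : SameSCC E t s := ⟨h.2, h.1⟩

theorem SameSCC.trans {s t u : V} (h₁ : SameSCC E s t) (h₂ : SameSCC E t u) : SameSCC E s u :=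
  ⟨Relation.ReflTransGen.trans h₁.1 h₂.1, Relation.ReflTransGen.trans h₂.2 h₁.2⟩

theorem SameSCC.map {F : W → W → Prop} {g : V → W} (hg : ∀ a b, E a b → F (g a) (g b))
    {s t : V} (h : SameSCC E s t) : SameSCC F (g s) (g t) :=
  ⟨Relation.ReflTransGen.lift g hg _ _ h.1, Relation.ReflTransGen.lift g hg _ _ h.2⟩

end Reach

section SCCProjection

variable {I O : Type*} {EI : I → I → Prop} {EO : O → O → Prop}

theorem sccProjO_eq_sccProjI_swap (s : I × O) : sccProjO EI EO s = sccProjI EO EI s.swap := by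
  ext b'
  constructor
  · rintro ⟨a', h⟩
    exact ⟨a', h.map (g := Prod.swap) fun _ _ e => ⟨e.2, e.1⟩⟩
  · rintro ⟨a', h⟩
    exact ⟨a', h.map (g := Prod.swap) fun _ _ e => ⟨e.2, e.1⟩⟩

theorem exists_sameSCC_of_cycle {a a' : I} {b : O} {c : ℕ}
    (hcyc : ReachIn (prodEdge EI EO) (c + 1) (a, b) (a, b)) (h : SameSCC EI a a') :
    ∃ b', SameSCC (prodEdge EI EO) (a, b) (a', b') := by
  obtain ⟨L, hto⟩ := reach_iff_exists_reachIn.1 h.1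
  obtain ⟨L', hback⟩ := reach_iff_exists_reachIn.1 h.2
  -- Returning as `a' → a` followed by `c` loops `a → a' → a` makes the round trip
  -- `(c + 1) * (L + L')` steps long, a multiple of the length of the cycle through `b`.
  have hloop : ReachIn EO (L + (L' + c * (L + L'))) b b := by
    convert (hcyc.map (g := Prod.snd) fun _ _ e => e.2).iterate (L + L') using 1
    ring
  obtain ⟨b', hO₁, hO₂⟩ := hloop.exists_split
  exact ⟨b', (hto.prod hO₁).reach, ((hback.trans ((hto.trans hback).iterate c)).prod hO₂).reach⟩

theorem sccProjI_eq_of_cycle {s : I × O} {c : ℕ}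
    (hcyc : ReachIn (prodEdge EI EO) (c + 1) s s) :
    sccProjI EI EO s = {a' | SameSCC EI s.1 a'} := by
  obtain ⟨a, b⟩ := s
  ext a'
  constructor
  · rintro ⟨b', h⟩
    exact h.map (g := Prod.fst) fun _ _ e => e.1
  · exact exists_sameSCC_of_cycle hcyc

theorem sccProjO_eq_of_cycle {s : I × O} {c : ℕ}
    (hcyc : ReachIn (prodEdge EI EO) (c + 1) s s) :
    sccProjO EI EO s = {b' | SameSCC EO s.2 b'} := by
  rw [sccProjO_eq_sccProjI_swap,
    sccProjI_eq_of_cycle (hcyc.map (g := Prod.swap) fun _ _ e => ⟨e.2, e.1⟩)]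
  rfl

theorem acc_iff_of_cycles {acc : I × O → Prop}
    (hProj : ∀ s t, sccProjI EI EO s = sccProjI EI EO t →
      sccProjO EI EO s = sccProjO EI EO t → (acc s ↔ acc t))
    {v u : I × O} {c d : ℕ} (hv : ReachIn (prodEdge EI EO) (c + 1) v v)
    (hu : ReachIn (prodEdge EI EO) (d + 1) u u)
    (hI : SameSCC EI v.1 u.1) (hO : SameSCC EO v.2 u.2) : acc v ↔ acc u := by
  refine hProj v u ?_ ?_
  · rw [sccProjI_eq_of_cycle hv, sccProjI_eq_of_cycle hu]
    ext
    exact ⟨hI.symm.trans, hI.trans⟩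
  · rw [sccProjO_eq_of_cycle hv, sccProjO_eq_of_cycle hu]
    ext
    exact ⟨hO.symm.trans, hO.trans⟩

end SCCProjection

section Lag

variable {I O : Type*} {EI : I → I → Prop} {EO : O → O → Prop}

theorem infOften_iff_frequently {V : Type*} {P : V → Prop} {π : ℕ → V} :
    InfOften P π ↔ ∃ᶠ n in atTop, P (π n) :=
  frequently_atTop.symm

theorem frequently_atTop_add_iff {P : ℕ → Prop} (m : ℕ) :
    (∃ᶠ n in atTop, P (n + m)) ↔ ∃ᶠ n in atTop, P n := by
  conv_rhs => rw [← map_add_atTop_eq_nat m]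
  exact frequently_map.symm

theorem infOften_of_lagged [Finite I] [Finite O] {acc : I × O → Prop}
    (hProj : ∀ s t, sccProjI EI EO s = sccProjI EI EO t →
      sccProjO EI EO s = sccProjO EI EO t → (acc s ↔ acc t))
    {σ π : ℕ → I × O} {m m' : ℕ}
    (hσ : ∀ n, prodEdge EI EO (σ n) (σ (n + 1))) (hπ : ∀ n, prodEdge EI EO (π n) (π (n + 1)))
    (hin : ∀ n, (σ (n + m)).1 = (π n).1) (hout : ∀ n, (π (n + m')).2 = (σ n).2)
    (hacc : InfOften acc σ) : InfOften acc π := by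
  rw [infOften_iff_frequently, ← frequently_atTop_add_iff m] at hacc
  obtain ⟨⟨v, u⟩, hvu⟩ : ∃ y : (I × O) × (I × O),
      ∃ᶠ k in atTop, acc (σ (k + m)) ∧ (σ (k + m), π (k + m + m')) = y :=
    frequently_exists.1 (hacc.mono fun k hk => ⟨_, hk, rfl⟩)
  obtain ⟨k₀, -, hacc₀, h₀⟩ := frequently_atTop.1 hvu 0
  obtain ⟨k₁, hk₁, -, h₁⟩ := frequently_atTop.1 hvu (k₀ + m + m' + 1)
  simp only [Prod.mk.injEq] at h₀ h₁
  obtain ⟨c, hv⟩ := exists_cycle_of_chain hσ (by omega : k₀ + m < k₁ + m) (h₀.1.trans h₁.1.symm)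
  obtain ⟨d, hu⟩ :=
    exists_cycle_of_chain hπ (by omega : k₀ + m + m' < k₁ + m + m') (h₀.2.trans h₁.2.symm)
  have hπI : ∀ {j k}, j ≤ k → Reach EI (π j).1 (π k).1 :=
    reach_of_chain (g := fun n => (π n).1) fun n => (hπ n).1
  -- `v.1` is the real input at times `k₀` and `k₁`, `u.1` the one at time `k₀ + m + m'`.
  have hI : SameSCC EI (σ (k₀ + m)).1 (π (k₀ + m + m')).1 := by
    rw [hin]
    refine ⟨hπI (by omega), ?_⟩
    rw [← hin k₀, h₀.1, ← h₁.1, hin]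
    exact hπI (by omega)
  have hO : SameSCC EO (σ (k₀ + m)).2 (π (k₀ + m + m')).2 := by
    rw [hout]
    exact ⟨.refl, .refl⟩
  have hacc_u : acc u := h₀.2 ▸ (acc_iff_of_cycles hProj hv hu hI hO).1 hacc₀
  rw [infOften_iff_frequently, ← frequently_atTop_add_iff (m + m')]
  exact hvu.mono fun k hk => by rw [← Nat.add_assoc, (Prod.mk.inj hk.2).2]; exact hacc_u

end Lag

section PrependSeq

variable {V : Type*} (m : ℕ) (p τ : ℕ → V)

def prependSeq (n : ℕ) : V := if n < m then p n else τ (n - m)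

variable {m p τ}

theorem prependSeq_add (n : ℕ) : prependSeq m p τ (n + m) = τ n := by
  simp [prependSeq]

theorem prependSeq_zero (h : p m = τ 0) : prependSeq m p τ 0 = p 0 := by
  rcases Nat.eq_zero_or_pos m with rfl | hm
  · simp [prependSeq, h]
  · simp [prependSeq, hm]

theorem prependSeq_chain {E : V → V → Prop} (hp : ∀ j < m, E (p j) (p (j + 1))) (hpm : p m = τ 0)
    (hτ : ∀ n, E (τ n) (τ (n + 1))) (n : ℕ) :
    E (prependSeq m p τ n) (prependSeq m p τ (n + 1)) := by
  unfold prependSeq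
  rcases lt_trichotomy (n + 1) m with h | h | h
  · rw [if_pos (by omega), if_pos h]
    exact hp n (by omega)
  · rw [if_pos (by omega), if_neg (by omega), h, Nat.sub_self, ← hpm, ← h]
    exact hp n (by omega)
  · rw [if_neg (by omega), if_neg (by omega), show n + 1 - m = n - m + 1 by omega]
    exact hτ _

theorem prependSeq_eqOn {τ' : ℕ → V} {N : ℕ} (h : EqOn τ τ' (Iic N)) :
    EqOn (prependSeq m p τ) (prependSeq m p τ') (Iic N) := by
  intro n hn
  unfold prependSeq
  split_ifs
  · rfl
  · exact h (show n - m ≤ N by simp only [mem_Iic] at hn; omega)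

end PrependSeq

section Simulation

variable {I O : Type*} (f : Strat I O) (o : O) (x : ℕ → I)

/-- `simPlay f o x` is the play consistent with `f` from `(x 0, o)` in which the environment
plays the inputs `x`; `simHist f o x n` is its history up to position `n`. -/
def simHist : ℕ → List (I × O)
  | 0 => [(x 0, o)]
  | n + 1 => simHist n ++ [(x (n + 1), f (simHist n) (x (n + 1)))]

def simPlay (n : ℕ) : I × O := (simHist f o x n).getLastD (x 0, o)

variable {f o x}

theorem simPlay_zero : simPlay f o x 0 = (x 0, o) := rfl

theorem simPlay_succ (n : ℕ) :
    simPlay f o x (n + 1) = (x (n + 1), f (simHist f o x n) (x (n + 1))) := by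
  simp [simPlay, simHist]

theorem simPlay_fst (n : ℕ) : (simPlay f o x n).1 = x n := by
  cases n with
  | zero => rfl
  | succ n => rw [simPlay_succ]

theorem hist_succ (π : ℕ → I × O) (n : ℕ) : hist π (n + 1) = hist π n ++ [π (n + 1)] := by
  simp [hist, List.range_succ]

theorem hist_length (π : ℕ → I × O) (n : ℕ) : (hist π n).length = n + 1 := by
  simp [hist]

theorem hist_simPlay (n : ℕ) : hist (simPlay f o x) n = simHist f o x n := by
  induction n with
  | zero => rfl
  | succ n ih => rw [hist_succ, ih, simPlay_succ]; rfl

theorem simPlay_consistent : Consistent f (x 0, o) (simPlay f o x) :=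
  ⟨simPlay_zero, fun n => by rw [simPlay_succ, hist_simPlay]⟩

theorem simHist_congr {x' : ℕ → I} {N : ℕ} (h : EqOn x x' (Iic N)) :
    simHist f o x N = simHist f o x' N := by
  induction N with
  | zero => simp [simHist, h (mem_Iic.2 le_rfl)]
  | succ n ih =>
    rw [simHist, simHist, ih (h.mono (Iic_subset_Iic.2 n.le_succ)), h (mem_Iic.2 le_rfl)]

theorem simPlay_eqOn {x' : ℕ → I} {N : ℕ} (h : EqOn x x' (Iic N)) :
    EqOn (simPlay f o x) (simPlay f o x') (Iic N) := fun n hn => by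
  rw [simPlay, simPlay, simHist_congr (h.mono (Iic_subset_Iic.2 hn)), h (Nat.zero_le N)]

end Simulation

section DelayedStrategy

variable {I O : Type*} {EI : I → I → Prop}

theorem getD_map_fst_hist_append {π : ℕ → I × O} {n k : ℕ} (hk : k ≤ n + 1) (d : I) :
    ((hist π n).map Prod.fst ++ [(π (n + 1)).1]).getD k d = (π k).1 := by
  have : (hist π n).map Prod.fst ++ [(π (n + 1)).1] = (hist π (n + 1)).map Prod.fst := by
    rw [hist_succ, List.map_append]
    rfl
  rw [this, hist, List.map_map, List.getD_eq_getElem?_getD, List.getElem?_map, List.getElem?_range (by omega)]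
  rfl

/-- Play the outputs `q 0, …, q (m' - 1)`, then answer, `m'` steps late, what `f` answers from
`(r 0, o)` when the inputs are `r 0, …, r (m - 1)` followed by the inputs seen so far. -/
def delayStrat (f : Strat I O) (o : O) (r : ℕ → I) (m : ℕ) (q : ℕ → O) (m' : ℕ) : Strat I O :=
  fun h inp => prependSeq m' q
    (fun n => (simPlay f o (prependSeq m r fun k => (h.map Prod.fst ++ [inp]).getD k inp) n).2)
    h.length

variable {f : Strat I O} {o : O} {r : ℕ → I} {m m' : ℕ} {q : ℕ → O} {s : I × O} {π : ℕ → I × O}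

theorem delayStrat_output (hq0 : q 0 = s.2) (hqm : q m' = o)
    (hπ : Consistent (delayStrat f o r m q m') s π) (n : ℕ) :
    (π n).2 = prependSeq m' q
      (fun k => (simPlay f o (prependSeq m r fun k => (π k).1) k).2) n := by
  cases n with
  | zero => rw [hπ.1, prependSeq_zero hqm, hq0]
  | succ n =>
    rw [hπ.2 n, delayStrat, hist_length]
    refine prependSeq_eqOn (fun k hk => ?_) (mem_Iic.2 le_rfl)
    refine congrArg Prod.snd (simPlay_eqOn (prependSeq_eqOn (fun j hj => ?_)) hk)
    exact getD_map_fst_hist_append hj _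

theorem exists_simulated_play {i : I} (hr0 : r 0 = i) (hr : ∀ j < m, EI (r j) (r (j + 1)))
    (hrm : r m = s.1) (hq0 : q 0 = s.2) (hqm : q m' = o)
    (hπ : Consistent (delayStrat f o r m q m') s π) (henv : EnvLegal EI π) :
    ∃ σ, Consistent f (i, o) σ ∧ EnvLegal EI σ ∧ (∀ n, (σ (n + m)).1 = (π n).1) ∧
      ∀ n, (π n).2 = prependSeq m' q (fun k => (σ k).2) n := by
  have hrm' : r m = (π 0).1 := by rw [hπ.1, hrm]
  refine ⟨_, ?_, fun n => ?_, fun n => ?_, delayStrat_output hq0 hqm hπ⟩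
  · simpa only [prependSeq_zero (τ := fun k => (π k).1) hrm', hr0] using
      simPlay_consistent (f := f) (o := o) (x := prependSeq m r fun k => (π k).1)
  · rw [simPlay_fst, simPlay_fst]
    exact prependSeq_chain hr hrm' henv n
  · rw [simPlay_fst, prependSeq_add]

end DelayedStrategy

theorem winning_region_union_of_sccs_general {I O : Type*} [Fintype I] [Fintype O]
    (EI : I → I → Prop) (EO : O → O → Prop) (acc : I × O → Prop)
    (hProj : ∀ s t, sccProjI EI EO s = sccProjI EI EO t →
      sccProjO EI EO s = sccProjO EI EO t → (acc s ↔ acc t))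
    (i ih : I) (o oh : O)
    (hSCC : SameSCC (prodEdge EI EO) (i, o) (ih, oh))
    (hwin : SysWins EI EO acc (i, o)) :
    SysWins EI EO acc (ih, oh) := by
  obtain ⟨f, hf⟩ := hwin
  obtain ⟨m, hpathI⟩ := reach_iff_exists_reachIn.1
    (Relation.ReflTransGen.lift Prod.fst (fun _ _ e => e.1) _ _ hSCC.1)
  obtain ⟨r, hr0, hrm, hr⟩ := hpathI.exists_seq
  obtain ⟨m', hpathO⟩ := reach_iff_exists_reachIn.1
    (Relation.ReflTransGen.lift Prod.snd (fun _ _ e => e.2) _ _ hSCC.2)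
  obtain ⟨q, hq0, hqm, hq⟩ := hpathO.exists_seq
  refine ⟨delayStrat f o r m q m', fun π hπ henv => ?_⟩
  obtain ⟨σ, hσ, hσenv, hσin, hσout⟩ := exists_simulated_play hr0 hr hrm hq0 hqm hπ henv
  obtain ⟨hσsys, hσacc⟩ := hf σ hσ hσenv
  have hπsys : SysLegal EO π := fun n => by
    rw [hσout, hσout]
    exact prependSeq_chain hq (by rw [hqm, hσ.1]) hσsys n
  refine ⟨hπsys, infOften_of_lagged hProj (fun n => ⟨hσenv n, hσsys n⟩)
    (fun n => ⟨henv n, hπsys n⟩) hσin (fun n => by rw [hσout, prependSeq_add]) hσacc⟩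

/-- In a separated weak Büchi game, the system's winning region is a union of SCCs
of the product game graph. -/
theorem winning_region_union_of_sccs {I O : Type*} [Fintype I] [Fintype O]
    (EI : I → I → Prop) (EO : O → O → Prop) (acc : I × O → Prop)
    (hUnion : ∀ s t, SameSCC (prodEdge EI EO) s t → (acc s ↔ acc t))
    (hProj : ∀ s t, sccProjI EI EO s = sccProjI EI EO t →
      sccProjO EI EO s = sccProjO EI EO t → (acc s ↔ acc t))
    (i ih : I) (o oh : O)
    (hSCC : SameSCC (prodEdge EI EO) (i, o) (ih, oh))
    (hwin : SysWins EI EO acc (i, o)) :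
    SysWins EI EO acc (ih, oh) :=
  winning_region_union_of_sccs_general EI EO acc hProj i ih o oh hSCC hwin
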